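/- arXiv:2311.06098 — 3 statements merged into one kernel-verified Lean document; each statement's English description precedes it below -/
import Mathlib

section
/- Let u, ρ₁, ρ₂ ∈ ℝ, let ρ_up = ρ₁ if u ≥ 0 and ρ_up = ρ₂ if u < 0, and let φ: ℝ → ℝ be twice continuously differentiable and convex. Then u·(φ'(ρ₁)(ρ_up − ρ₁) + φ'(ρ₂)(ρ₂ − ρ_up) + φ(ρ₁) − φ(ρ₂)) ≥ 0. -/
theorem ConvexOn.add_deriv_mul_sub_le {S : Set ℝ} {f : ℝ → ℝ} (hf : ConvexOn ℝ S f)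
    {x y : ℝ} (hx : x ∈ S) (hy : y ∈ S) (hfd : DifferentiableAt ℝ f x) :
    f x + deriv f x * (y - x) ≤ f y := by
  rcases lt_trichotomy x y with hxy | rfl | hyx
  · have hslope := hf.deriv_le_slope hx hy hxy hfd
    rw [slope_def_field, le_div_iff₀ (sub_pos.2 hxy)] at hslope
    linarith
  · simp
  · have hslope := hf.slope_le_deriv hy hx hyx hfd
    rw [slope_def_field, div_le_iff₀ (sub_pos.2 hyx)] at hslope
    linarith

theorem stmt_2 (u ρ₁ ρ₂ : ℝ) (ρup : ℝ)
    (hup : ρup = if 0 ≤ u then ρ₁ else ρ₂)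
    (φ : ℝ → ℝ) (hφ : ContDiff ℝ 2 φ) (hconv : ConvexOn ℝ Set.univ φ) :
    0 ≤ u * (deriv φ ρ₁ * (ρup - ρ₁) + deriv φ ρ₂ * (ρ₂ - ρup) + φ ρ₁ - φ ρ₂) := by
  have hφd : Differentiable ℝ φ := hφ.differentiable two_ne_zero
  have tangent (x y : ℝ) : φ x + deriv φ x * (y - x) ≤ φ y :=
    hconv.add_deriv_mul_sub_le trivial trivial (hφd x)
  -- The bracket is the gap above the tangent at ρ₂ evaluated at ρ₁ when `0 ≤ u`, and minus the
  -- gap above the tangent at ρ₁ evaluated at ρ₂ when `u < 0`.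
  split_ifs at hup with hu <;> rw [hup]
  · have h := tangent ρ₂ ρ₁
    exact mul_nonneg hu (by linarith)
  · have h := tangent ρ₁ ρ₂
    exact mul_nonneg_of_nonpos_of_nonpos (le_of_not_ge hu) (by linarith)
end

section
/- Let u, ρ₁, ρ₂ ∈ ℝ with ρ_up defined as the upwind value (ρ_up = ρ₁ if u ≥ 0, else ρ_up = ρ₂), and φ twice continuously differentiable and convex. Then there exists ξ between min(ρ₁,ρ₂) and max(ρ₁,ρ₂) such that u·(φ'(ρ₁)(ρ_up − ρ₁) + φ'(ρ₂)(ρ₂ − ρ_up) + φ(ρ₁) − φ(ρ₂)) = (1/2)·φ''(ξ)·|u|·(ρ₁ − ρ₂)². -/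
/-!
The upwind choice kills one of the two derivative terms: for `u ≥ 0` what remains is `u` times the
second-order Taylor remainder of `φ` expanded at `ρ₂` and evaluated at `ρ₁`, for `u < 0` it is `-u`
times the remainder expanded at `ρ₁` and evaluated at `ρ₂`. The Lagrange form of that remainder
gives `ξ`.
-/

open Set

theorem exists_eq_taylor_two {f : ℝ → ℝ} (hf : ContDiff ℝ 2 f) (x₀ x : ℝ) :
    ∃ ξ ∈ uIcc x₀ x,
      f x = f x₀ + deriv f x₀ * (x - x₀) + deriv (deriv f) ξ * (x - x₀) ^ 2 / 2 := by
  rcases eq_or_ne x₀ x with rfl | hx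
  · exact ⟨x₀, left_mem_uIcc, by ring⟩
  obtain ⟨ξ, hξ, hrem⟩ := taylor_mean_remainder_lagrange_iteratedDeriv (n := 1) hx hf.contDiffOn
  have hderiv : derivWithin f (uIcc x₀ x) x₀ = deriv f x₀ :=
    (hf.differentiable (by norm_num) x₀).derivWithin (uniqueDiffOn_uIcc hx x₀ left_mem_uIcc)
  refine ⟨ξ, uIoo_subset_uIcc_self hξ, ?_⟩
  rw [taylorWithinEval_succ, taylor_within_zero_eval, iteratedDerivWithin_one, hderiv,
    iteratedDeriv_succ, iteratedDeriv_one] at hrem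
  norm_num at hrem
  linear_combination hrem

theorem stmt_3_general (u ρ₁ ρ₂ : ℝ) (ρup : ℝ)
    (hup : ρup = if 0 ≤ u then ρ₁ else ρ₂)
    (φ : ℝ → ℝ) (hφ : ContDiff ℝ 2 φ) :
    ∃ ξ ∈ Set.Icc (min ρ₁ ρ₂) (max ρ₁ ρ₂),
      u * (deriv φ ρ₁ * (ρup - ρ₁) + deriv φ ρ₂ * (ρ₂ - ρup) + φ ρ₁ - φ ρ₂)
        = (1/2) * deriv (deriv φ) ξ * |u| * (ρ₁ - ρ₂)^2 := by
  by_cases hu : 0 ≤ u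
  · obtain ⟨ξ, hξ, htaylor⟩ := exists_eq_taylor_two hφ ρ₂ ρ₁
    rw [uIcc_comm] at hξ
    refine ⟨ξ, hξ, ?_⟩
    rw [hup, if_pos hu, abs_of_nonneg hu]
    linear_combination u * htaylor
  · obtain ⟨ξ, hξ, htaylor⟩ := exists_eq_taylor_two hφ ρ₁ ρ₂
    refine ⟨ξ, hξ, ?_⟩
    rw [hup, if_neg hu, abs_of_neg (not_le.mp hu)]
    linear_combination -u * htaylor

theorem stmt_3 (u ρ₁ ρ₂ : ℝ) (ρup : ℝ)
    (hup : ρup = if 0 ≤ u then ρ₁ else ρ₂)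
    (φ : ℝ → ℝ) (hφ : ContDiff ℝ 2 φ) (hconv : ConvexOn ℝ Set.univ φ) :
    ∃ ξ ∈ Set.Icc (min ρ₁ ρ₂) (max ρ₁ ρ₂),
      u * (deriv φ ρ₁ * (ρup - ρ₁) + deriv φ ρ₂ * (ρ₂ - ρup) + φ ρ₁ - φ ρ₂)
        = (1/2) * deriv (deriv φ) ξ * |u| * (ρ₁ - ρ₂)^2 :=
  stmt_3_general u ρ₁ ρ₂ ρup hup φ hφ
end

section
/- Let A be an n×n real matrix that is weakly diagonally dominant with nonnegative diagonal entries, nonpositive off-diagonal entries, and zero row sums. Then for any τ > 0 and any diagonal matrix D with positive diagonal entries, A + τ⁻¹·D is invertible and its inverse has all nonnegative entries. -/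
/-!
A matrix `M` with nonpositive off-diagonal entries and positive row sums is monotone:
`0 ≤ M *ᵥ x` forces `0 ≤ x`, since at an index where `x` is minimal and negative,
`(M *ᵥ x) i ≤ (∑ⱼ M i j) * x i < 0`. Monotonicity makes `M *ᵥ ·` injective, hence `M`
invertible, and the columns of `M⁻¹` are solutions of `M *ᵥ v = Pi.single j 1 ≥ 0`.
For `A + τ⁻¹ • D` the off-diagonal entries are those of `A`, and the row sums are
`τ⁻¹ * D i i`.
-/

namespace Matrix

variable {ι K : Type*} [Fintype ι] [Field K] [LinearOrder K] [IsStrictOrderedRing K]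
  {M : Matrix ι ι K}

theorem mulVec_apply_le_rowSum_mul_of_forall_le (hoff : ∀ i j, i ≠ j → M i j ≤ 0)
    {x : ι → K} {i : ι} (hmin : ∀ j, x i ≤ x j) :
    (M *ᵥ x) i ≤ (∑ j, M i j) * x i := by
  rw [mulVec, dotProduct, Finset.sum_mul]
  refine Finset.sum_le_sum fun j _ => ?_
  rcases eq_or_ne i j with rfl | hij
  · exact le_rfl
  · exact mul_le_mul_of_nonpos_left (hmin j) (hoff i j hij)

variable (hoff : ∀ i j, i ≠ j → M i j ≤ 0) (hrow : ∀ i, 0 < ∑ j, M i j)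
include hoff hrow

theorem nonneg_of_mulVec_nonneg {x : ι → K} (hx : 0 ≤ M *ᵥ x) : 0 ≤ x := by
  intro i
  show 0 ≤ x i
  by_contra! hneg
  obtain ⟨i₀, -, hmin⟩ := Finset.exists_min_image Finset.univ x ⟨i, Finset.mem_univ i⟩
  have hi₀ : x i₀ < 0 := (hmin i (Finset.mem_univ i)).trans_lt hneg
  have hle := mulVec_apply_le_rowSum_mul_of_forall_le hoff (fun j => hmin j (Finset.mem_univ j))
  have hx₀ : 0 ≤ (M *ᵥ x) i₀ := hx i₀
  linarith [mul_neg_of_pos_of_neg (hrow i₀) hi₀]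

theorem mulVec_injective_of_rowSum_pos : Function.Injective M.mulVec := by
  have hle : ∀ x y, M *ᵥ x = M *ᵥ y → y ≤ x := fun x y hxy =>
    sub_nonneg.mp <| nonneg_of_mulVec_nonneg hoff hrow <| by
      rw [mulVec_sub, hxy, sub_self]
  exact fun x y hxy => le_antisymm (hle y x hxy.symm) (hle x y hxy)

theorem isUnit_of_rowSum_pos [DecidableEq ι] : IsUnit M :=
  mulVec_injective_iff_isUnit.mp (mulVec_injective_of_rowSum_pos hoff hrow)

theorem inv_nonneg_of_rowSum_pos [DecidableEq ι] (i j : ι) : 0 ≤ M⁻¹ i j := by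
  have hM : M * M⁻¹ = 1 :=
    mul_nonsing_inv M ((isUnit_iff_isUnit_det M).mp (isUnit_of_rowSum_pos hoff hrow))
  have hcol : 0 ≤ M⁻¹ *ᵥ Pi.single j 1 := by
    refine nonneg_of_mulVec_nonneg hoff hrow ?_
    rw [mulVec_mulVec, hM, one_mulVec]
    exact Pi.single_nonneg.mpr zero_le_one
  simpa [mulVec_single_one] using hcol i

end Matrix

theorem stmt_12_general (n : ℕ) (A : Matrix (Fin n) (Fin n) ℝ)
    (hoff : ∀ i j, i ≠ j → A i j ≤ 0)
    (hrow : ∀ i, ∑ j, A i j = 0)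
    (τ : ℝ) (hτ : 0 < τ)
    (D : Matrix (Fin n) (Fin n) ℝ)
    (hD : ∀ i j, i ≠ j → D i j = 0) (hDpos : ∀ i, 0 < D i i) :
    IsUnit (A + τ⁻¹ • D) ∧ ∀ i j, 0 ≤ (A + τ⁻¹ • D)⁻¹ i j := by
  have hMoff : ∀ i j, i ≠ j → (A + τ⁻¹ • D) i j ≤ 0 := fun i j hij => by
    simpa [hD i j hij] using hoff i j hij
  have hMrow : ∀ i, 0 < ∑ j, (A + τ⁻¹ • D) i j := fun i => by
    have hDrow : ∑ j, D i j = D i i :=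
      Finset.sum_eq_single i (fun j _ hji => hD i j hji.symm) (by simp)
    simp only [Matrix.add_apply, Matrix.smul_apply, smul_eq_mul,
      Finset.sum_add_distrib, ← Finset.mul_sum, hrow i, hDrow, zero_add]
    exact mul_pos (inv_pos.mpr hτ) (hDpos i)
  exact ⟨Matrix.isUnit_of_rowSum_pos hMoff hMrow,
    Matrix.inv_nonneg_of_rowSum_pos hMoff hMrow⟩

theorem stmt_12 (n : ℕ) (A : Matrix (Fin n) (Fin n) ℝ)
    (hdiag : ∀ i, 0 ≤ A i i)
    (hoff : ∀ i j, i ≠ j → A i j ≤ 0)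
    (hdom : ∀ i, ∑ j, |A i j| ≤ 2 * A i i)
    (hrow : ∀ i, ∑ j, A i j = 0)
    (τ : ℝ) (hτ : 0 < τ)
    (D : Matrix (Fin n) (Fin n) ℝ)
    (hD : ∀ i j, i ≠ j → D i j = 0) (hDpos : ∀ i, 0 < D i i) :
    IsUnit (A + τ⁻¹ • D) ∧ ∀ i j, 0 ≤ (A + τ⁻¹ • D)⁻¹ i j :=
  stmt_12_general n A hoff hrow τ hτ D hD hDpos
end
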